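/- Let (G_n, δ_n)_{n∈ℕ} be a sequence of proper metric monoids such that for every n ∈ ℕ the metric δ_n is bi-invariant (both left- and right-invariant), and suppose the sequence is Cauchy for the Gromov-Hausdorff monoid distance Υ. Then there exists a proper metric monoid (G, δ) such that lim_{n→∞} Υ((G_n,δ_n),(G,δ)) = 0. -/

import Mathlib

/-!
The limit is the metric ultraproduct `H` of the `G n` along a nonprincipal ultrafilter `U`:
sequences at `U`-bounded distance from `1`, with the `U`-limit of the pointwise distances,
modulo distance zero. Bi-invariance makes the pointwise product 2-Lipschitz, so `H` is a
metric monoid.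

If `G n` is `ε`-close to `U`-almost every `G m`, via almost isomorphisms `σ m`, `κ m`, then
`g ↦ (σ m g)ₘ` and `h ↦ U-lim κ m (hₘ)` form an almost isomorphism between `G n` and `H` with
the same error: the estimates pass to the `U`-limit, and the limit exists because `κ m (hₘ)`
stays in a closed ball of the proper space `G n`. So `Υ(G n, H) → 0`. Finally `H` is proper:
it is complete by a diagonal argument, and each of its balls is covered by the images of finite
nets of compact balls of the `G n` that approximate it.
-/

/-- `(ς, κ)` is an `r`-local `ε`-almost isometric isomorphism between the metric
monoids `G` and `H`. -/
def IsLocAlmostIsoIso {G H : Type*} [Monoid G] [MetricSpace G] [Monoid H] [MetricSpace H]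
    (ς : G → H) (κ : H → G) (ε r : ℝ) : Prop :=
  ς 1 = 1 ∧ κ 1 = 1 ∧
    (∀ g ∈ Metric.closedBall (1 : G) r, ∀ g' ∈ Metric.closedBall (1 : G) r,
      ∀ h ∈ Metric.closedBall (1 : H) r,
        |dist (ς g * ς g') h - dist (g * g') (κ h)| ≤ ε) ∧
    (∀ g ∈ Metric.closedBall (1 : H) r, ∀ g' ∈ Metric.closedBall (1 : H) r,
      ∀ h ∈ Metric.closedBall (1 : G) r,
        |dist (κ g * κ g') h - dist (g * g') (ς h)| ≤ ε)
/-- The Gromov-Hausdorff monoid distance `Υ` between two (proper) metric monoids: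
`min {√2/2, inf {ε > 0 : ∃ a (1/ε)-local ε-almost isometric isomorphism}}`. -/
noncomputable def Upsilon (G H : Type*) [Monoid G] [MetricSpace G] [Monoid H]
    [MetricSpace H] : ℝ :=
  sInf ({ε : ℝ | 0 < ε ∧ ∃ (ς : G → H) (κ : H → G), IsLocAlmostIsoIso ς κ ε (1 / ε)} ∪
    {Real.sqrt 2 / 2})

open Filter Metric Topology

theorem IsCompact.exists_tendsto_ultrafilter {X ι : Type*} [TopologicalSpace X] {K : Set X}
    (hK : IsCompact K) {U : Ultrafilter ι} {f : ι → X} (hf : ∀ᶠ i in U, f i ∈ K) :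
    ∃ x ∈ K, Tendsto f U (𝓝 x) :=
  hK.ultrafilter_le_nhds (U.map f) (by rwa [Ultrafilter.coe_map, le_principal_iff])

section Invariant

variable {M : Type*} [PseudoMetricSpace M]

theorem dist_mul_one_le_add [Monoid M] [IsIsometricSMul M M] (a b : M) :
    dist (a * b) 1 ≤ dist a 1 + dist b 1 := by
  have := dist_mul_left a b 1
  rw [mul_one] at this
  linarith [dist_triangle (a * b) a 1]

variable [Mul M] [IsIsometricSMul M M] [IsIsometricSMul Mᵐᵒᵖ M]

theorem dist_mul_mul_le_add (a b c d : M) : dist (a * b) (c * d) ≤ dist a c + dist b d :=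
  calc dist (a * b) (c * d) ≤ dist (a * b) (c * b) + dist (c * b) (c * d) := dist_triangle _ _ _
    _ = dist a c + dist b d := by rw [dist_mul_right, dist_mul_left]

theorem continuousMul_of_isIsometricSMul : ContinuousMul M := by
  refine ⟨(LipschitzWith.of_dist_le_mul fun p q => ?_ : LipschitzWith 2 _).continuous⟩
  have h₁ : dist p.1 q.1 ≤ dist p q := le_max_left _ _
  have h₂ : dist p.2 q.2 ≤ dist p q := le_max_right _ _
  push_cast
  linarith [dist_mul_mul_le_add p.1 p.2 q.1 q.2]

end Invariant

section AlmostIsometry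

variable {G H : Type*} [Monoid G] [MetricSpace G] [Monoid H] [MetricSpace H]
  {ς : G → H} {κ : H → G} {ε r : ℝ}

theorem IsLocAlmostIsoIso.symm (h : IsLocAlmostIsoIso ς κ ε r) : IsLocAlmostIsoIso κ ς ε r :=
  ⟨h.2.1, h.1, h.2.2.2, h.2.2.1⟩

theorem IsLocAlmostIsoIso.mono {ε' r' : ℝ} (h : IsLocAlmostIsoIso ς κ ε r) (hε : ε ≤ ε')
    (hr : r' ≤ r) : IsLocAlmostIsoIso ς κ ε' r' := by
  obtain ⟨h₁, h₂, h₃, h₄⟩ := h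
  have hG := closedBall_subset_closedBall (x := (1 : G)) hr
  have hH := closedBall_subset_closedBall (x := (1 : H)) hr
  exact ⟨h₁, h₂, fun g hg g' hg' x hx => (h₃ g (hG hg) g' (hG hg') x (hH hx)).trans hε,
    fun g hg g' hg' x hx => (h₄ g (hH hg) g' (hH hg') x (hG hx)).trans hε⟩

theorem IsLocAlmostIsoIso.abs_dist_one_sub_le (h : IsLocAlmostIsoIso ς κ ε r) {g : G}
    (hg : g ∈ closedBall 1 r) : |dist (ς g) 1 - dist g 1| ≤ ε := by
  have hr : 0 ≤ r := nonempty_closedBall.1 ⟨g, hg⟩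
  simpa [h.1, h.2.1] using h.2.2.1 g hg 1 (mem_closedBall_self hr) 1 (mem_closedBall_self hr)

theorem IsLocAlmostIsoIso.exists_finite_cover [ProperSpace G] (h : IsLocAlmostIsoIso ς κ ε r)
    (hε : 0 ≤ ε) {R δ : ℝ} (hR : R + ε ≤ r) (hδ : 0 < δ) :
    ∃ t : Set H, t.Finite ∧ closedBall 1 R ⊆ ⋃ y ∈ t, ball y (δ + ε) := by
  obtain ⟨s, hsK, hs, hcover⟩ := (isCompact_closedBall (1 : G) (R + ε)).finite_cover_balls hδ
  refine ⟨ς '' s, hs.image ς, fun y hy => ?_⟩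
  have hyr : y ∈ closedBall 1 r := closedBall_subset_closedBall (by linarith) hy
  have hκy : κ y ∈ closedBall 1 (R + ε) := by
    have := abs_le.1 (h.symm.abs_dist_one_sub_le hyr)
    rw [mem_closedBall] at hy ⊢
    linarith
  obtain ⟨x, hxs, hx⟩ := Set.mem_iUnion₂.1 (hcover hκy)
  have hxr : x ∈ closedBall 1 r := closedBall_subset_closedBall hR (hsK hxs)
  have hclose := h.2.2.1 x hxr 1 (mem_closedBall_self (dist_nonneg.trans hxr)) y hyr
  rw [h.1, mul_one, mul_one] at hclose
  rw [mem_ball, dist_comm] at hx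
  refine Set.mem_iUnion₂.2 ⟨ς x, Set.mem_image_of_mem ς hxs, ?_⟩
  rw [mem_ball, dist_comm]
  linarith [(abs_le.1 hclose).2]

end AlmostIsometry

section Upsilon

variable {G H : Type*} [Monoid G] [MetricSpace G] [Monoid H] [MetricSpace H]

theorem upsilon_nonneg : 0 ≤ Upsilon G H := by
  refine le_csInf ⟨_, Set.mem_union_right _ rfl⟩ ?_
  rintro b (⟨hb, -⟩ | rfl)
  · exact hb.le
  · positivity

theorem upsilon_le_of_isLocAlmostIsoIso {ς : G → H} {κ : H → G} {ε : ℝ} (hε : 0 < ε)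
    (h : IsLocAlmostIsoIso ς κ ε (1 / ε)) : Upsilon G H ≤ ε := by
  refine csInf_le ⟨0, ?_⟩ (Set.mem_union_left _ ⟨hε, ς, κ, h⟩)
  rintro b (⟨hb, -⟩ | rfl)
  · exact hb.le
  · positivity

theorem exists_isLocAlmostIsoIso_of_upsilon_lt {ε : ℝ} (hε : ε ≤ √2 / 2)
    (h : Upsilon G H < ε) : ∃ (ς : G → H) (κ : H → G), IsLocAlmostIsoIso ς κ ε (1 / ε) := by
  rw [Upsilon] at h
  obtain ⟨a, ha, haε⟩ :=
    exists_lt_of_csInf_lt ⟨_, Set.mem_union_right _ (Set.mem_singleton _)⟩ h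
  rcases ha with ⟨ha, ς, κ, hiso⟩ | rfl
  · exact ⟨ς, κ, hiso.mono haε.le (one_div_le_one_div_of_le ha haε.le)⟩
  · exact absurd hε haε.not_ge

variable {ι : Type*} {X : ι → Type*} [∀ i, Monoid (X i)] [∀ i, MetricSpace (X i)]
  [∀ i, ProperSpace (X i)]

theorem totallyBounded_closedBall_of_forall_upsilon_lt
    (h : ∀ ε > 0, ∃ i, Upsilon (X i) H < ε) (R : ℝ) : TotallyBounded (closedBall (1 : H) R) := by
  rw [totallyBounded_iff]
  intro δ hδ
  have hsmall : ∀ᶠ ε in 𝓝[>] (0 : ℝ), ε < δ / 2 ∧ ε < 1 / 2 ∧ R + 1 ≤ ε⁻¹ :=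
    (eventually_nhdsWithin_of_eventually_nhds (eventually_lt_nhds (half_pos hδ))).and
      ((eventually_nhdsWithin_of_eventually_nhds (eventually_lt_nhds one_half_pos)).and
        (tendsto_inv_nhdsGT_zero.eventually_ge_atTop _))
  obtain ⟨ε, ⟨hεδ, hε₁, hεR⟩, hε₀ : 0 < ε⟩ := (hsmall.and self_mem_nhdsWithin).exists
  obtain ⟨i, hi⟩ := h ε hε₀
  obtain ⟨ς, κ, hiso⟩ := exists_isLocAlmostIsoIso_of_upsilon_lt
    (by nlinarith [Real.one_lt_sqrt_two]) hi
  obtain ⟨t, ht, hcover⟩ := hiso.exists_finite_cover hε₀.le (R := R)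
    (by rw [one_div]; linarith) (half_pos hδ)
  exact ⟨t, ht, hcover.trans (Set.iUnion₂_mono fun y _ => ball_subset_ball (by linarith))⟩

theorem properSpace_of_forall_upsilon_lt [CompleteSpace H]
    (h : ∀ ε > 0, ∃ i, Upsilon (X i) H < ε) : ProperSpace H :=
  .of_seq_closedBall (x := 1) tendsto_id <| .of_forall fun R =>
    (totallyBounded_closedBall_of_forall_upsilon_lt h R).isCompact_of_isClosed isClosed_closedBall

end Upsilon


@[ext]
structure BoundedSeq (G : ℕ → Type*) [∀ n, One (G n)] [∀ n, PseudoMetricSpace (G n)]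
    (U : Ultrafilter ℕ) where
  seq : ∀ n, G n
  bounded : ∃ C, ∀ᶠ n in U, dist (seq n) 1 ≤ C

namespace BoundedSeq

section Metric

variable {G : ℕ → Type*} [∀ n, One (G n)] [∀ n, PseudoMetricSpace (G n)] {U : Ultrafilter ℕ}

theorem exists_tendsto_dist (x y : BoundedSeq G U) :
    ∃ d, Tendsto (fun n => dist (x.seq n) (y.seq n)) U (𝓝 d) := by
  obtain ⟨C, hC⟩ := x.bounded
  obtain ⟨C', hC'⟩ := y.bounded
  obtain ⟨d, -, hd⟩ := (isCompact_Icc (a := 0) (b := C + C')).exists_tendsto_ultrafilter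
    (hC.and hC' |>.mono fun n hn => ⟨dist_nonneg,
      (dist_triangle_right _ _ _).trans (add_le_add hn.1 hn.2)⟩)
  exact ⟨d, hd⟩

noncomputable instance : PseudoMetricSpace (BoundedSeq G U) where
  dist x y := limUnder U fun n => dist (x.seq n) (y.seq n)
  dist_self x := tendsto_nhds_unique (tendsto_nhds_limUnder (exists_tendsto_dist x x))
    (by simp)
  dist_comm x y := tendsto_nhds_unique (tendsto_nhds_limUnder (exists_tendsto_dist x y))
    (by simpa [dist_comm] using tendsto_nhds_limUnder (exists_tendsto_dist y x))
  dist_triangle x y z := le_of_tendsto_of_tendsto'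
    (tendsto_nhds_limUnder (exists_tendsto_dist x z))
    ((tendsto_nhds_limUnder (exists_tendsto_dist x y)).add
      (tendsto_nhds_limUnder (exists_tendsto_dist y z))) fun _ => dist_triangle _ _ _

theorem tendsto_dist (x y : BoundedSeq G U) :
    Tendsto (fun n => dist (x.seq n) (y.seq n)) U (𝓝 (dist x y)) :=
  tendsto_nhds_limUnder (exists_tendsto_dist x y)

instance : One (BoundedSeq G U) := ⟨⟨1, 0, .of_forall fun _ => (dist_self _).le⟩⟩

@[simp]
theorem one_seq (n : ℕ) : (1 : BoundedSeq G U).seq n = 1 := rfl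

variable (U) in
open Classical in
/-- The sequence `x` as an element of `BoundedSeq G U`, or `1` if `x` is unbounded along `U`. -/
noncomputable def ofSeq (x : ∀ n, G n) : BoundedSeq G U :=
  if h : ∃ C, ∀ᶠ n in U, dist (x n) 1 ≤ C then ⟨x, h⟩ else 1

theorem ofSeq_seq {x : ∀ n, G n} (h : ∃ C, ∀ᶠ n in U, dist (x n) 1 ≤ C) :
    (ofSeq U x).seq = x := by
  rw [ofSeq, dif_pos h]

theorem completeSpace_of_le_atTop (hU : (U : Filter ℕ) ≤ atTop) :
    CompleteSpace (BoundedSeq G U) := by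
  refine Metric.complete_of_convergent_controlled_sequences (fun i => (1 / 2 : ℝ) ^ i)
    (fun i => by positivity) fun u hu => ?_
  -- Diagonal argument: at index `m` take the representative of the latest `u i` whose
  -- distances to the earlier terms are, at `m`, already close to their limits.
  let good (i m : ℕ) : Prop :=
    i ≤ m ∧ ∀ j ≤ i, dist ((u j).seq m) ((u i).seq m) < dist (u j) (u i) + (1 / 2) ^ i
  have eventually_good (i : ℕ) : ∀ᶠ m in U, good i m :=
    ((eventually_ge_atTop i).filter_mono hU).and <|
      (Set.finite_le_nat i).eventually_all.2 fun j _ =>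
        (tendsto_dist (u j) (u i)).eventually_lt_const (lt_add_of_pos_right _ (by positivity))
  let idx (m : ℕ) : ℕ := Nat.findGreatest (good · m) m
  have close {j m : ℕ} (hj : good j m) :
      dist ((u j).seq m) ((u (idx m)).seq m) ≤ 2 * (1 / 2) ^ j := by
    have hle : j ≤ idx m := Nat.le_findGreatest hj.1 hj
    have hclose := (Nat.findGreatest_spec (P := (good · m)) hj.1 hj).2 j hle
    have hpow : ((1 : ℝ) / 2) ^ idx m ≤ (1 / 2) ^ j :=
      pow_le_pow_of_le_one (by norm_num) (by norm_num) hle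
    linarith [hu j j (idx m) le_rfl hle]
  obtain ⟨C, hC⟩ := (u 0).bounded
  let w : BoundedSeq G U := ⟨fun m => (u (idx m)).seq m, C + 2, by
    filter_upwards [hC, eventually_good 0] with m hm hgood
    have := close hgood
    norm_num at this
    linarith [dist_triangle_left ((u (idx m)).seq m) 1 ((u 0).seq m)]⟩
  refine ⟨w, tendsto_iff_dist_tendsto_zero.2 <| squeeze_zero (fun _ => dist_nonneg)
    (fun j => le_of_tendsto (tendsto_dist (u j) w) ((eventually_good j).mono fun m => close))
    ?_⟩
  simpa using (tendsto_pow_atTop_nhds_zero_of_lt_one (r := (1 / 2 : ℝ)) (by norm_num)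
    (by norm_num)).const_mul 2

end Metric

section Monoid

variable {G : ℕ → Type*} [∀ n, Monoid (G n)] [∀ n, PseudoMetricSpace (G n)]
  [∀ n, IsIsometricSMul (G n) (G n)] {U : Ultrafilter ℕ}

instance : Mul (BoundedSeq G U) where
  mul x y := ⟨fun n => x.seq n * y.seq n, by
    obtain ⟨C, hC⟩ := x.bounded
    obtain ⟨C', hC'⟩ := y.bounded
    exact ⟨C + C', (hC.and hC').mono fun n hn =>
      (dist_mul_one_le_add _ _).trans (add_le_add hn.1 hn.2)⟩⟩

@[simp]
theorem mul_seq (x y : BoundedSeq G U) (n : ℕ) : (x * y).seq n = x.seq n * y.seq n := rfl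

instance : Monoid (BoundedSeq G U) where
  mul_assoc x y z := BoundedSeq.ext <| funext fun n => mul_assoc _ _ _
  one_mul x := BoundedSeq.ext <| funext fun n => one_mul _
  mul_one x := BoundedSeq.ext <| funext fun n => mul_one _

instance : IsIsometricSMul (BoundedSeq G U) (BoundedSeq G U) :=
  ⟨fun x => Isometry.of_dist_eq fun y z => tendsto_nhds_unique (tendsto_dist (x * y) (x * z))
    (by simpa only [mul_seq, dist_mul_left] using tendsto_dist y z)⟩

variable [∀ n, IsIsometricSMul (G n)ᵐᵒᵖ (G n)]

instance : IsIsometricSMul (BoundedSeq G U)ᵐᵒᵖ (BoundedSeq G U) :=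
  ⟨fun x => Isometry.of_dist_eq fun y z =>
    tendsto_nhds_unique (tendsto_dist (y * x.unop) (z * x.unop))
      (by simpa only [mul_seq, dist_mul_right] using tendsto_dist y z)⟩

instance : ContinuousMul (BoundedSeq G U) := continuousMul_of_isIsometricSMul

end Monoid

end BoundedSeq

instance {M : Type*} [Mul M] [PseudoMetricSpace M] [ContinuousMul M] [IsIsometricSMul M M] :
    IsIsometricSMul (SeparationQuotient M) (SeparationQuotient M) :=
  ⟨SeparationQuotient.surjective_mk.forall.2 fun a => Isometry.of_dist_eq <|
    SeparationQuotient.surjective_mk.forall₂.2 fun b c => by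
      simp only [smul_eq_mul, ← SeparationQuotient.mk_mul, SeparationQuotient.dist_mk,
        dist_mul_left]⟩

abbrev MetricUltraproduct (G : ℕ → Type*) [∀ n, One (G n)] [∀ n, PseudoMetricSpace (G n)]
    (U : Ultrafilter ℕ) : Type _ :=
  SeparationQuotient (BoundedSeq G U)

namespace MetricUltraproduct

open SeparationQuotient (mk mk_mul mk_one dist_mk surjective_mk)

section Representatives

variable {G : ℕ → Type*} [∀ n, One (G n)] [∀ n, PseudoMetricSpace (G n)] {U : Ultrafilter ℕ}

open Classical in
/-- A representative of `h`; choosing `1` for `h = 1` makes `limMap κ 1 = 1` hold exactly. -/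
noncomputable def out (h : MetricUltraproduct G U) : BoundedSeq G U :=
  if h = 1 then 1 else Function.surjInv surjective_mk h

@[simp]
theorem mk_out (h : MetricUltraproduct G U) : mk h.out = h := by
  unfold out
  split_ifs with h1
  · rw [h1, mk_one]
  · exact Function.surjInv_eq _ _

theorem out_one : (1 : MetricUltraproduct G U).out = 1 := if_pos rfl

theorem eventually_dist_out_one_lt {h : MetricUltraproduct G U} {r : ℝ} (hh : dist h 1 < r) :
    ∀ᶠ n in U, dist (h.out.seq n) 1 < r := by
  have := BoundedSeq.tendsto_dist h.out 1
  rw [← dist_mk, mk_out, mk_one] at this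
  exact this.eventually_lt_const hh

end Representatives

section Maps

variable {G : ℕ → Type*} [∀ n, Monoid (G n)] [∀ n, MetricSpace (G n)] {U : Ultrafilter ℕ}
  {X : Type*} {σ : ∀ n, X → G n} {κ : ∀ n, G n → X} {ε r r' : ℝ}

variable (U) in
noncomputable def diagMap (σ : ∀ n, X → G n) (g : X) : MetricUltraproduct G U :=
  mk (BoundedSeq.ofSeq U fun n => σ n g)

noncomputable def limMap [One X] [TopologicalSpace X] (κ : ∀ n, G n → X)
    (h : MetricUltraproduct G U) : X :=
  limUnder U fun n => κ n (h.out.seq n)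

theorem diagMap_one [One X] (hσ : ∀ᶠ n in U, σ n 1 = 1) : diagMap U σ 1 = 1 := by
  have hb : ∃ C, ∀ᶠ n in U, dist (σ n 1) 1 ≤ C := ⟨0, hσ.mono fun n hn => by simp [hn]⟩
  rw [diagMap, ← mk_one, SeparationQuotient.mk_eq_mk, Metric.inseparable_iff]
  refine tendsto_nhds_unique (BoundedSeq.tendsto_dist _ 1) (tendsto_const_nhds.congr' ?_)
  filter_upwards [hσ] with n hn
  simp [BoundedSeq.ofSeq_seq hb, hn]

theorem limMap_one [One X] [TopologicalSpace X] [T2Space X] (hκ : ∀ᶠ n in U, κ n 1 = 1) :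
    limMap κ (1 : MetricUltraproduct G U) = 1 := by
  rw [limMap, out_one]
  exact (tendsto_const_nhds.congr' (hκ.mono fun n hn => hn.symm)).limUnder_eq

variable [Monoid X] [MetricSpace X]

theorem seq_ofSeq_of_eventually_isLocAlmostIsoIso
    (hiso : ∀ᶠ n in U, IsLocAlmostIsoIso (σ n) (κ n) ε r) {g : X} (hg : g ∈ closedBall 1 r) :
    (BoundedSeq.ofSeq U fun n => σ n g).seq = fun n => σ n g :=
  BoundedSeq.ofSeq_seq ⟨r + ε, hiso.mono fun n hn => by
    linarith [(abs_le.1 (hn.abs_dist_one_sub_le hg)).2, mem_closedBall.1 hg]⟩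

theorem tendsto_limMap [ProperSpace X] (hiso : ∀ᶠ n in U, IsLocAlmostIsoIso (σ n) (κ n) ε r)
    {h : MetricUltraproduct G U} (hh : dist h 1 < r) :
    Tendsto (fun n => κ n (h.out.seq n)) U (𝓝 (limMap κ h)) := by
  refine tendsto_nhds_limUnder ?_
  obtain ⟨x, -, hx⟩ := (isCompact_closedBall (1 : X) (r + ε)).exists_tendsto_ultrafilter
    (f := fun n => κ n (h.out.seq n)) (U := U) <| by
      filter_upwards [hiso, eventually_dist_out_one_lt hh] with n hn hn'
      have := hn.symm.abs_dist_one_sub_le (mem_closedBall.2 hn'.le)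
      rw [mem_closedBall]
      linarith [(abs_le.1 this).2]
  exact ⟨x, hx⟩

variable [∀ n, IsIsometricSMul (G n) (G n)] [∀ n, IsIsometricSMul (G n)ᵐᵒᵖ (G n)]
  [ProperSpace X]

theorem abs_dist_diagMap_mul_sub_le (hiso : ∀ᶠ n in U, IsLocAlmostIsoIso (σ n) (κ n) ε r)
    (hr : r' < r) {g g' : X} (hg : g ∈ closedBall 1 r') (hg' : g' ∈ closedBall 1 r')
    {h : MetricUltraproduct G U} (hh : h ∈ closedBall 1 r') :
    |dist (diagMap U σ g * diagMap U σ g') h - dist (g * g') (limMap κ h)| ≤ ε := by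
  have hgr := closedBall_subset_closedBall hr.le hg
  have hg'r := closedBall_subset_closedBall hr.le hg'
  have hhr : dist h 1 < r := (mem_closedBall.1 hh).trans_lt hr
  have hA : Tendsto (fun n => dist (σ n g * σ n g') (h.out.seq n)) U
      (𝓝 (dist (diagMap U σ g * diagMap U σ g') h)) := by
    have := BoundedSeq.tendsto_dist
      (BoundedSeq.ofSeq U (fun n => σ n g) * BoundedSeq.ofSeq U fun n => σ n g') h.out
    rw [← dist_mk, mk_mul, mk_out] at this
    simp only [BoundedSeq.mul_seq, seq_ofSeq_of_eventually_isLocAlmostIsoIso hiso hgr,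
      seq_ofSeq_of_eventually_isLocAlmostIsoIso hiso hg'r] at this
    exact this
  have hB := (tendsto_const_nhds (x := g * g')).dist (tendsto_limMap hiso hhr)
  refine le_of_tendsto ((hA.sub hB).abs) ?_
  filter_upwards [hiso, eventually_dist_out_one_lt hhr] with n hn hn'
  exact hn.2.2.1 g hgr g' hg'r _ (mem_closedBall.2 hn'.le)

theorem abs_dist_limMap_mul_sub_le [ContinuousMul X]
    (hiso : ∀ᶠ n in U, IsLocAlmostIsoIso (σ n) (κ n) ε r) (hr : r' < r)
    {h h' : MetricUltraproduct G U} (hh : h ∈ closedBall 1 r') (hh' : h' ∈ closedBall 1 r')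
    {g : X} (hg : g ∈ closedBall 1 r') :
    |dist (limMap κ h * limMap κ h') g - dist (h * h') (diagMap U σ g)| ≤ ε := by
  have hgr := closedBall_subset_closedBall hr.le hg
  have hhr : dist h 1 < r := (mem_closedBall.1 hh).trans_lt hr
  have hh'r : dist h' 1 < r := (mem_closedBall.1 hh').trans_lt hr
  have hA := ((tendsto_limMap hiso hhr).mul (tendsto_limMap hiso hh'r)).dist
    (tendsto_const_nhds (x := g))
  have hB : Tendsto (fun n => dist (h.out.seq n * h'.out.seq n) (σ n g)) U
      (𝓝 (dist (h * h') (diagMap U σ g))) := by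
    have := BoundedSeq.tendsto_dist (h.out * h'.out) (BoundedSeq.ofSeq U fun n => σ n g)
    rw [← dist_mk, mk_mul, mk_out, mk_out] at this
    simp only [BoundedSeq.mul_seq, seq_ofSeq_of_eventually_isLocAlmostIsoIso hiso hgr] at this
    exact this
  refine le_of_tendsto ((hA.sub hB).abs) ?_
  filter_upwards [hiso, eventually_dist_out_one_lt hhr, eventually_dist_out_one_lt hh'r]
    with n hn hn' hn''
  exact hn.2.2.2 _ (mem_closedBall.2 hn'.le) _ (mem_closedBall.2 hn''.le) g hgr

theorem isLocAlmostIsoIso_diagMap_limMap [ContinuousMul X]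
    (hiso : ∀ᶠ n in U, IsLocAlmostIsoIso (σ n) (κ n) ε r) (hr : r' < r) :
    IsLocAlmostIsoIso (diagMap U σ) (limMap κ) ε r' :=
  ⟨diagMap_one (hiso.mono fun _ hn => hn.1), limMap_one (hiso.mono fun _ hn => hn.2.1),
    fun _ hg _ hg' _ hh => abs_dist_diagMap_mul_sub_le hiso hr hg hg' hh,
    fun _ hh _ hh' _ hg => abs_dist_limMap_mul_sub_le hiso hr hh hh' hg⟩

end Maps

end MetricUltraproduct

section Convergence

variable {G : ℕ → Type*} [∀ n, Monoid (G n)] [∀ n, MetricSpace (G n)]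
  [∀ n, IsIsometricSMul (G n) (G n)] [∀ n, IsIsometricSMul (G n)ᵐᵒᵖ (G n)] {U : Ultrafilter ℕ}

theorem upsilon_metricUltraproduct_le {X : Type*} [Monoid X] [MetricSpace X] [ProperSpace X]
    [ContinuousMul X] {ε : ℝ} (hε : ε ≤ √2 / 2) (h : ∀ᶠ n in U, Upsilon X (G n) < ε) :
    Upsilon X (MetricUltraproduct G U) ≤ 2 * ε := by
  have hε₀ : 0 < ε := let ⟨_, hn⟩ := h.exists; upsilon_nonneg.trans_lt hn
  obtain ⟨σ, hσ⟩ := Filter.skolem.1 <| h.mono fun _ hn =>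
    exists_isLocAlmostIsoIso_of_upsilon_lt hε hn
  obtain ⟨κ, hiso⟩ := Filter.skolem.1 hσ
  have hr : 1 / (2 * ε) < 1 / ε := one_div_lt_one_div_of_lt hε₀ (by linarith)
  exact upsilon_le_of_isLocAlmostIsoIso (by positivity) <|
    (MetricUltraproduct.isLocAlmostIsoIso_diagMap_limMap hiso hr).mono (by linarith) le_rfl

theorem tendsto_upsilon_metricUltraproduct [∀ n, ProperSpace (G n)]
    (hU : (U : Filter ℕ) ≤ atTop)
    (hG : ∀ ε : ℝ, 0 < ε → ∃ N : ℕ, ∀ m, N ≤ m → ∀ n, N ≤ n → Upsilon (G m) (G n) < ε) :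
    Tendsto (fun n => Upsilon (G n) (MetricUltraproduct G U)) atTop (𝓝 0) := by
  have : ∀ n, ContinuousMul (G n) := fun _ => continuousMul_of_isIsometricSMul
  rw [Metric.tendsto_atTop]
  intro δ hδ
  obtain ⟨N, hN⟩ := hG (min (δ / 3) (1 / 2)) (by positivity)
  refine ⟨N, fun n hn => ?_⟩
  have hle := upsilon_metricUltraproduct_le (U := U) (G := G)
    ((min_le_right _ _).trans (by nlinarith [Real.one_lt_sqrt_two]))
    (((eventually_ge_atTop N).filter_mono hU).mono fun m hm => hN n hn m hm)
  rw [Real.dist_eq, sub_zero, abs_of_nonneg upsilon_nonneg]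
  linarith [min_le_left (δ / 3) (1 / 2)]

end Convergence

theorem upsilon_cauchy_biinvariant_monoids_convergence_general
    (G : ℕ → Type) [∀ n, Monoid (G n)] [∀ n, MetricSpace (G n)]
    (h_left : ∀ n, ∀ g h k : G n, dist (g * h) (g * k) = dist h k)
    (h_right : ∀ n, ∀ g h k : G n, dist (h * g) (k * g) = dist h k)
    (h_proper : ∀ n, ProperSpace (G n))
    (h_cauchy : ∀ ε : ℝ, 0 < ε → ∃ N : ℕ, ∀ m, N ≤ m → ∀ n, N ≤ n →
      Upsilon (G m) (G n) < ε) :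
    ∃ (H : Type) (_ : Monoid H) (_ : MetricSpace H),
      (∀ g h k : H, dist (g * h) (g * k) = dist h k) ∧
      (Continuous fun p : H × H => p.1 * p.2) ∧
      ProperSpace H ∧
      Filter.Tendsto (fun n => Upsilon (G n) H) Filter.atTop (nhds 0) := by
  have : ∀ n, IsIsometricSMul (G n) (G n) := fun n => ⟨fun c => .of_dist_eq (h_left n c)⟩
  have : ∀ n, IsIsometricSMul (G n)ᵐᵒᵖ (G n) := fun n =>
    ⟨fun c => .of_dist_eq (h_right n c.unop)⟩
  let U := hyperfilter ℕ
  have hU : (U : Filter ℕ) ≤ atTop := Nat.cofinite_eq_atTop ▸ hyperfilter_le_cofinite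
  have : CompleteSpace (BoundedSeq G U) := BoundedSeq.completeSpace_of_le_atTop hU
  have hlim := tendsto_upsilon_metricUltraproduct (G := G) hU h_cauchy
  refine ⟨MetricUltraproduct G U, inferInstance, inferInstance, dist_mul_left, continuous_mul,
    properSpace_of_forall_upsilon_lt fun ε hε => (hlim.eventually (gt_mem_nhds hε)).exists,
    hlim⟩

/-- A Cauchy sequence, for the Gromov-Hausdorff monoid distance `Υ`,
of proper metric monoids with bi-invariant metrics converges for `Υ` to some proper
metric monoid. -/
theorem upsilon_cauchy_biinvariant_monoids_convergence
    (G : ℕ → Type) [∀ n, Monoid (G n)] [∀ n, MetricSpace (G n)]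
    (h_left : ∀ n, ∀ g h k : G n, dist (g * h) (g * k) = dist h k)
    (h_right : ∀ n, ∀ g h k : G n, dist (h * g) (k * g) = dist h k)
    (h_cont : ∀ n, Continuous fun p : G n × G n => p.1 * p.2)
    (h_proper : ∀ n, ProperSpace (G n))
    (h_cauchy : ∀ ε : ℝ, 0 < ε → ∃ N : ℕ, ∀ m, N ≤ m → ∀ n, N ≤ n →
      Upsilon (G m) (G n) < ε) :
    ∃ (H : Type) (_ : Monoid H) (_ : MetricSpace H),
      (∀ g h k : H, dist (g * h) (g * k) = dist h k) ∧
      (Continuous fun p : H × H => p.1 * p.2) ∧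
      ProperSpace H ∧
      Filter.Tendsto (fun n => Upsilon (G n) H) Filter.atTop (nhds 0) :=
  upsilon_cauchy_biinvariant_monoids_convergence_general G h_left h_right h_proper h_cauchy
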